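/- Let β, θ, β′, θ′ ∈ ℝ^p and α, α′ ∈ ℝⁿ satisfy the constraints Xθ ∈ R and Xθ′ ∈ R; Xβ ⊥ R and Xβ′ ⊥ R; α ∈ S and α′ ∈ S; α ⊥ R and α′ ⊥ R. If Xβ + Xθ + α = Xβ′ + Xθ′ + α′, then β = β′, θ = θ′, and α = α′. -/

import Mathlib

/-!
Subtracting the two representations, `X(θ - θ')` lies in `R` and is orthogonal to `R`, hence
vanishes. Then `X(β - β') = α' - α` lies in `col(X) ∩ S = R` and is orthogonal to `R`, hence
vanishes too. Injectivity of `X` gives `θ = θ'` and `β = β'`.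
-/

open Matrix

section DotProductOrthogonal

variable {ι K : Type*} [Fintype ι] [Ring K] {R : Submodule K (ι → K)}

theorem add_dotProduct_eq_zero_of_forall {v v' : ι → K} (hv : ∀ u ∈ R, v ⬝ᵥ u = 0)
    (hv' : ∀ u ∈ R, v' ⬝ᵥ u = 0) : ∀ u ∈ R, (v + v') ⬝ᵥ u = 0 := fun u hu => by
  rw [add_dotProduct, hv u hu, hv' u hu, add_zero]

theorem sub_dotProduct_eq_zero_of_forall {v v' : ι → K} (hv : ∀ u ∈ R, v ⬝ᵥ u = 0)
    (hv' : ∀ u ∈ R, v' ⬝ᵥ u = 0) : ∀ u ∈ R, (v - v') ⬝ᵥ u = 0 := fun u hu => by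
  rw [sub_dotProduct, hv u hu, hv' u hu, sub_zero]

variable [LinearOrder K] [IsStrictOrderedRing K]

theorem eq_zero_of_mem_of_forall_dotProduct_eq_zero {v : ι → K} (hv : v ∈ R)
    (hvR : ∀ u ∈ R, v ⬝ᵥ u = 0) : v = 0 :=
  dotProduct_self_eq_zero.mp (hvR v hv)

theorem eq_and_eq_of_add_eq_add_of_forall_dotProduct_eq_zero {r r' v v' : ι → K}
    (hr : r ∈ R) (hr' : r' ∈ R) (hv : ∀ u ∈ R, v ⬝ᵥ u = 0) (hv' : ∀ u ∈ R, v' ⬝ᵥ u = 0)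
    (h : r + v = r' + v') : r = r' ∧ v = v' := by
  have hdiff : r - r' = v' - v := sub_eq_sub_iff_add_eq_add.mpr (by rw [h, add_comm])
  have hr_eq : r = r' := sub_eq_zero.mp <| eq_zero_of_mem_of_forall_dotProduct_eq_zero
    (R.sub_mem hr hr') (hdiff ▸ sub_dotProduct_eq_zero_of_forall hv' hv)
  exact ⟨hr_eq, add_left_cancel (hr_eq ▸ h)⟩

end DotProductOrthogonal

theorem stmt_0
    (n p : ℕ) (X : Matrix (Fin n) (Fin p) ℝ)
    (hX : LinearIndependent ℝ (fun j : Fin p => fun i : Fin n => X i j))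
    (S : Submodule ℝ (Fin n → ℝ))
    (R : Submodule ℝ (Fin n → ℝ))
    (hR : R = Submodule.span ℝ (Set.range (fun j : Fin p => fun i : Fin n => X i j)) ⊓ S)
    (β θ β' θ' : Fin p → ℝ) (α α' : Fin n → ℝ)
    (hθ : X.mulVec θ ∈ R) (hθ' : X.mulVec θ' ∈ R)
    (hβ : ∀ u ∈ R, X.mulVec β ⬝ᵥ u = 0) (hβ' : ∀ u ∈ R, X.mulVec β' ⬝ᵥ u = 0)
    (hα : α ∈ S) (hα' : α' ∈ S)
    (hαR : ∀ u ∈ R, α ⬝ᵥ u = 0) (hα'R : ∀ u ∈ R, α' ⬝ᵥ u = 0)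
    (heq : X.mulVec β + X.mulVec θ + α = X.mulVec β' + X.mulVec θ' + α') :
    β = β' ∧ θ = θ' ∧ α = α' := by
  have hXinj : Function.Injective X.mulVec := Matrix.mulVec_injective_iff.mpr hX
  obtain ⟨hXθ, hrest⟩ := eq_and_eq_of_add_eq_add_of_forall_dotProduct_eq_zero hθ hθ'
    (add_dotProduct_eq_zero_of_forall hβ hαR) (add_dotProduct_eq_zero_of_forall hβ' hα'R)
    (by convert heq using 1 <;> abel)
  have hdiff : X.mulVec β - X.mulVec β' = α' - α :=
    sub_eq_sub_iff_add_eq_add.mpr (by rw [hrest, add_comm])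
  have hdiff_mem : X.mulVec β - X.mulVec β' ∈ R := by
    rw [hR, ← mulVec_sub]
    refine ⟨(Matrix.range_mulVecLin X).le (LinearMap.mem_range_self _ _), ?_⟩
    exact mulVec_sub X β β' ▸ hdiff ▸ S.sub_mem hα' hα
  have hXβ : X.mulVec β = X.mulVec β' := sub_eq_zero.mp <|
    eq_zero_of_mem_of_forall_dotProduct_eq_zero hdiff_mem (sub_dotProduct_eq_zero_of_forall hβ hβ')
  exact ⟨hXinj hXβ, hXinj hXθ, add_left_cancel (hXβ ▸ hrest)⟩
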